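/- arXiv:math/9912112 — 9 statements merged into one kernel-verified Lean document; each statement's English description precedes it below -/
import Mathlib

section
/- The 36 matrices I_α·I_β (1 ≤ α < β ≤ 9) together with the 84 matrices I_α·I_β·I_γ (1 ≤ α < β < γ ≤ 9) are all skew-symmetric 16×16 real matrices and are linearly independent over ℝ; hence these 120 matrices form a basis of the space of all skew-symmetric 16×16 real matrices (the Lie algebra so(16)). -/
open Matrix

namespace Spin9

/-- `E8 i j` is the 8×8 real matrix with `+1` in position `(i,j)`, `-1` in position `(j,i)`
and `0` elsewhere (for `i < j`). -/
noncomputable def E8 (i j : Fin 8) : Matrix (Fin 8) (Fin 8) ℝ :=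
  Matrix.single i j 1 - Matrix.single j i 1

/-- The seven matrices `e₁, …, e₇` (indexed by `Fin 7`, so `e 0 = e₁`, …, `e 6 = e₇`). -/
noncomputable def e : Fin 7 → Matrix (Fin 8) (Fin 8) ℝ :=
  ![E8 0 7 + E8 1 6 - E8 2 5 - E8 3 4,
    -E8 0 6 + E8 1 7 + E8 2 4 - E8 3 5,
    -E8 0 5 + E8 1 4 - E8 2 7 + E8 3 6,
    -E8 0 4 - E8 1 5 - E8 2 6 - E8 3 7,
    -E8 0 2 - E8 1 3 + E8 4 6 + E8 5 7,
    E8 0 3 - E8 1 2 - E8 4 7 + E8 5 6,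
    E8 0 1 - E8 2 3 - E8 4 5 + E8 6 7]

/-- Reindexing of 16×16 matrices written in 8+8 block form. -/
noncomputable def toM16 :
    Matrix (Fin 8 ⊕ Fin 8) (Fin 8 ⊕ Fin 8) ℝ ≃ Matrix (Fin 16) (Fin 16) ℝ :=
  Matrix.reindex finSumFinEquiv finSumFinEquiv

/-- The nine 16×16 matrices `I₁, …, I₉` (indexed by `Fin 9`, so `I 0 = I₁`, …, `I 8 = I₉`):
`I_α = [[0, −e_α],[e_α, 0]]` for `1 ≤ α ≤ 7`, `I₈ = [[0, E],[E, 0]]`, `I₉ = [[E, 0],[0, −E]]`. -/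
noncomputable def I : Fin 9 → Matrix (Fin 16) (Fin 16) ℝ :=
  ![toM16 (Matrix.fromBlocks 0 (-(e 0)) (e 0) 0),
    toM16 (Matrix.fromBlocks 0 (-(e 1)) (e 1) 0),
    toM16 (Matrix.fromBlocks 0 (-(e 2)) (e 2) 0),
    toM16 (Matrix.fromBlocks 0 (-(e 3)) (e 3) 0),
    toM16 (Matrix.fromBlocks 0 (-(e 4)) (e 4) 0),
    toM16 (Matrix.fromBlocks 0 (-(e 5)) (e 5) 0),
    toM16 (Matrix.fromBlocks 0 (-(e 6)) (e 6) 0),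
    toM16 (Matrix.fromBlocks 0 1 1 0),
    toM16 (Matrix.fromBlocks 1 0 0 (-1))]

/-- Index set for the 36 products `I_α I_β` (`α < β`) together with the
84 products `I_α I_β I_γ` (`α < β < γ`). -/
noncomputable def pairTripleFamily :
    {p : Fin 9 × Fin 9 // p.1 < p.2} ⊕
      {t : Fin 9 × Fin 9 × Fin 9 // t.1 < t.2.1 ∧ t.2.1 < t.2.2} →
      Matrix (Fin 16) (Fin 16) ℝ :=
  Sum.elim (fun p => I p.1.1 * I p.1.2) (fun t => I t.1.1 * I t.1.2.1 * I t.1.2.2)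



/-- signed permutation matrix -/
def ofSP {R : Type*} [Ring R] (p : Fin 16 → Fin 16) (s : Fin 16 → R) :
    Matrix (Fin 16) (Fin 16) R :=
  Matrix.of fun i j => if j = p i then s i else 0

lemma ofSP_mul {R : Type*} [Ring R] (p q : Fin 16 → Fin 16) (s t : Fin 16 → R) :
    ofSP p s * ofSP q t = ofSP (fun i => q (p i)) (fun i => s i * t (p i)) := by
  ext i j
  simp only [ofSP, Matrix.mul_apply, Matrix.of_apply]
  rw [Finset.sum_eq_single (p i)]
  · simp
  · intro k _ hk; simp only [if_neg hk, zero_mul]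
  · simp

lemma ofSP_transpose (p : Fin 16 → Fin 16) (s : Fin 16 → ℝ)
    (hp : ∀ i, p (p i) = i) (hs : ∀ i, s (p i) = s i) :
    (ofSP p s)ᵀ = ofSP p s := by
  ext i j
  simp only [ofSP, Matrix.transpose_apply, Matrix.of_apply]
  by_cases h : i = p j
  · have h2 : j = p i := by rw [h, hp]
    rw [if_pos h, if_pos h2, h2, hs]
  · have h2 : ¬ j = p i := fun hc => h (by rw [hc, hp])
    rw [if_neg h, if_neg h2]

lemma ofSP_neg {R : Type*} [Ring R] (p : Fin 16 → Fin 16) (s : Fin 16 → R) :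
    -(ofSP p s) = ofSP p (fun i => -(s i)) := by
  ext i j
  simp only [ofSP, Matrix.neg_apply, Matrix.of_apply]
  split <;> simp

lemma ofSP_one {R : Type*} [Ring R] : (ofSP (fun i => i) (fun _ => (1 : R))) = 1 := by
  ext i j
  simp only [ofSP, Matrix.one_apply, Matrix.of_apply]
  by_cases h : i = j
  · simp [h]
  · rw [if_neg (fun hc => h hc.symm), if_neg h]

lemma ofSP_map (p : Fin 16 → Fin 16) (s : Fin 16 → ℤ) :
    (ofSP p s).map ((↑) : ℤ → ℝ) = ofSP p (fun i => ((s i : ℤ) : ℝ)) := by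
  ext i j
  simp only [ofSP, Matrix.map_apply, Matrix.of_apply]
  split <;> simp

def pt : Fin 9 → Fin 16 → Fin 16 :=
  ![![15, 14, 13, 12, 11, 10, 9, 8, 7, 6, 5, 4, 3, 2, 1, 0],
    ![14, 15, 12, 13, 10, 11, 8, 9, 6, 7, 4, 5, 2, 3, 0, 1],
    ![13, 12, 15, 14, 9, 8, 11, 10, 5, 4, 7, 6, 1, 0, 3, 2],
    ![12, 13, 14, 15, 8, 9, 10, 11, 4, 5, 6, 7, 0, 1, 2, 3],
    ![10, 11, 8, 9, 14, 15, 12, 13, 2, 3, 0, 1, 6, 7, 4, 5],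
    ![11, 10, 9, 8, 15, 14, 13, 12, 3, 2, 1, 0, 7, 6, 5, 4],
    ![9, 8, 11, 10, 13, 12, 15, 14, 1, 0, 3, 2, 5, 4, 7, 6],
    ![8, 9, 10, 11, 12, 13, 14, 15, 0, 1, 2, 3, 4, 5, 6, 7],
    ![0, 1, 2, 3, 4, 5, 6, 7, 8, 9, 10, 11, 12, 13, 14, 15]]

def st : Fin 9 → Fin 16 → ℤ :=
  ![![-1, -1, 1, 1, -1, -1, 1, 1, 1, 1, -1, -1, 1, 1, -1, -1],
    ![1, -1, -1, 1, 1, -1, -1, 1, -1, 1, 1, -1, -1, 1, 1, -1],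
    ![1, -1, 1, -1, 1, -1, 1, -1, -1, 1, -1, 1, -1, 1, -1, 1],
    ![1, 1, 1, 1, -1, -1, -1, -1, -1, -1, -1, -1, 1, 1, 1, 1],
    ![1, 1, -1, -1, -1, -1, 1, 1, -1, -1, 1, 1, 1, 1, -1, -1],
    ![-1, 1, -1, 1, 1, -1, 1, -1, 1, -1, 1, -1, -1, 1, -1, 1],
    ![-1, 1, 1, -1, 1, -1, -1, 1, 1, -1, -1, 1, -1, 1, 1, -1],
    ![1, 1, 1, 1, 1, 1, 1, 1, 1, 1, 1, 1, 1, 1, 1, 1],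
    ![1, 1, 1, 1, 1, 1, 1, 1, -1, -1, -1, -1, -1, -1, -1, -1]]

lemma pt_invol : ∀ (α : Fin 9) (i : Fin 16), pt α (pt α i) = i := by decide
lemma st_symm : ∀ (α : Fin 9) (i : Fin 16), st α (pt α i) = st α i := by decide
lemma st_sq : ∀ (α : Fin 9) (i : Fin 16), st α i * st α (pt α i) = 1 := by decide
lemma pt_st_anti : ∀ (α β : Fin 9), α ≠ β → ∀ (i : Fin 16),
    pt β (pt α i) = pt α (pt β i) ∧
      st α i * st β (pt α i) = -(st β i * st α (pt β i)) := by decide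


def E8z (i j : Fin 8) : Matrix (Fin 8) (Fin 8) ℤ :=
  Matrix.single i j 1 - Matrix.single j i 1

def ez : Fin 7 → Matrix (Fin 8) (Fin 8) ℤ :=
  ![E8z 0 7 + E8z 1 6 - E8z 2 5 - E8z 3 4,
    -E8z 0 6 + E8z 1 7 + E8z 2 4 - E8z 3 5,
    -E8z 0 5 + E8z 1 4 - E8z 2 7 + E8z 3 6,
    -E8z 0 4 - E8z 1 5 - E8z 2 6 - E8z 3 7,
    -E8z 0 2 - E8z 1 3 + E8z 4 6 + E8z 5 7,
    E8z 0 3 - E8z 1 2 - E8z 4 7 + E8z 5 6,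
    E8z 0 1 - E8z 2 3 - E8z 4 5 + E8z 6 7]

def Izt : Fin 9 → Matrix (Fin 16) (Fin 16) ℤ := fun α => ofSP (pt α) (st α)

-- cast lemmas
lemma cadd {m n : Type*} (M N : Matrix m n ℤ) :
    (M + N).map ((↑) : ℤ → ℝ) = M.map (↑) + N.map (↑) :=
  Matrix.map_add _ (fun a b => Int.cast_add a b) M N

lemma csub {m n : Type*} (M N : Matrix m n ℤ) :
    (M - N).map ((↑) : ℤ → ℝ) = M.map (↑) - N.map (↑) :=
  Matrix.map_sub _ (fun a b => Int.cast_sub a b) M N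

lemma cneg {m n : Type*} (M : Matrix m n ℤ) :
    (-M).map ((↑) : ℤ → ℝ) = -(M.map (↑)) := by
  ext i j; simp [Matrix.map_apply]

lemma czero {m n : Type*} : ((0 : Matrix m n ℤ)).map ((↑) : ℤ → ℝ) = 0 :=
  Matrix.map_zero _ (by simp)

lemma cone {n : Type*} [Fintype n] [DecidableEq n] :
    ((1 : Matrix n n ℤ)).map ((↑) : ℤ → ℝ) = 1 :=
  Matrix.map_one _ (by simp) (by simp)

lemma cstd (i j : Fin 8) :
    (Matrix.single i j (1 : ℤ)).map ((↑) : ℤ → ℝ) = Matrix.single i j 1 := by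
  ext a b
  simp only [Matrix.single, Matrix.map_apply, Matrix.of_apply]
  split <;> simp

lemma E8_eq (i j : Fin 8) : (E8z i j).map ((↑) : ℤ → ℝ) = E8 i j := by
  unfold E8 E8z
  rw [csub, cstd, cstd]

lemma e_eq (a : Fin 7) : (ez a).map ((↑) : ℤ → ℝ) = e a := by
  fin_cases a
  · show (E8z 0 7 + E8z 1 6 - E8z 2 5 - E8z 3 4).map ((↑) : ℤ → ℝ) = E8 0 7 + E8 1 6 - E8 2 5 - E8 3 4
    simp only [cadd, csub, cneg, E8_eq]
  · show (-E8z 0 6 + E8z 1 7 + E8z 2 4 - E8z 3 5).map ((↑) : ℤ → ℝ) = -E8 0 6 + E8 1 7 + E8 2 4 - E8 3 5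
    simp only [cadd, csub, cneg, E8_eq]
  · show (-E8z 0 5 + E8z 1 4 - E8z 2 7 + E8z 3 6).map ((↑) : ℤ → ℝ) = -E8 0 5 + E8 1 4 - E8 2 7 + E8 3 6
    simp only [cadd, csub, cneg, E8_eq]
  · show (-E8z 0 4 - E8z 1 5 - E8z 2 6 - E8z 3 7).map ((↑) : ℤ → ℝ) = -E8 0 4 - E8 1 5 - E8 2 6 - E8 3 7
    simp only [cadd, csub, cneg, E8_eq]
  · show (-E8z 0 2 - E8z 1 3 + E8z 4 6 + E8z 5 7).map ((↑) : ℤ → ℝ) = -E8 0 2 - E8 1 3 + E8 4 6 + E8 5 7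
    simp only [cadd, csub, cneg, E8_eq]
  · show (E8z 0 3 - E8z 1 2 - E8z 4 7 + E8z 5 6).map ((↑) : ℤ → ℝ) = E8 0 3 - E8 1 2 - E8 4 7 + E8 5 6
    simp only [cadd, csub, cneg, E8_eq]
  · show (E8z 0 1 - E8z 2 3 - E8z 4 5 + E8z 6 7).map ((↑) : ℤ → ℝ) = E8 0 1 - E8 2 3 - E8 4 5 + E8 6 7
    simp only [cadd, csub, cneg, E8_eq]

set_option maxHeartbeats 1000000 in
lemma Iz_eq0 :
    (Matrix.reindex finSumFinEquiv finSumFinEquiv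
      (Matrix.fromBlocks 0 (-(ez 0)) (ez 0) 0) : Matrix (Fin 16) (Fin 16) ℤ) = Izt 0 := by
  decide +kernel
set_option maxHeartbeats 1000000 in
lemma Iz_eq1 :
    (Matrix.reindex finSumFinEquiv finSumFinEquiv
      (Matrix.fromBlocks 0 (-(ez 1)) (ez 1) 0) : Matrix (Fin 16) (Fin 16) ℤ) = Izt 1 := by
  decide +kernel
set_option maxHeartbeats 1000000 in
lemma Iz_eq2 :
    (Matrix.reindex finSumFinEquiv finSumFinEquiv
      (Matrix.fromBlocks 0 (-(ez 2)) (ez 2) 0) : Matrix (Fin 16) (Fin 16) ℤ) = Izt 2 := by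
  decide +kernel
set_option maxHeartbeats 1000000 in
lemma Iz_eq3 :
    (Matrix.reindex finSumFinEquiv finSumFinEquiv
      (Matrix.fromBlocks 0 (-(ez 3)) (ez 3) 0) : Matrix (Fin 16) (Fin 16) ℤ) = Izt 3 := by
  decide +kernel
set_option maxHeartbeats 1000000 in
lemma Iz_eq4 :
    (Matrix.reindex finSumFinEquiv finSumFinEquiv
      (Matrix.fromBlocks 0 (-(ez 4)) (ez 4) 0) : Matrix (Fin 16) (Fin 16) ℤ) = Izt 4 := by
  decide +kernel
set_option maxHeartbeats 1000000 in
lemma Iz_eq5 :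
    (Matrix.reindex finSumFinEquiv finSumFinEquiv
      (Matrix.fromBlocks 0 (-(ez 5)) (ez 5) 0) : Matrix (Fin 16) (Fin 16) ℤ) = Izt 5 := by
  decide +kernel
set_option maxHeartbeats 1000000 in
lemma Iz_eq6 :
    (Matrix.reindex finSumFinEquiv finSumFinEquiv
      (Matrix.fromBlocks 0 (-(ez 6)) (ez 6) 0) : Matrix (Fin 16) (Fin 16) ℤ) = Izt 6 := by
  decide +kernel
set_option maxHeartbeats 1000000 in
lemma Iz_eq7 :
    (Matrix.reindex finSumFinEquiv finSumFinEquiv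
      (Matrix.fromBlocks (0 : Matrix (Fin 8) (Fin 8) ℤ) 1 1 (0 : Matrix (Fin 8) (Fin 8) ℤ)) : Matrix (Fin 16) (Fin 16) ℤ) = Izt 7 := by
  decide +kernel
set_option maxHeartbeats 1000000 in
lemma Iz_eq8 :
    (Matrix.reindex finSumFinEquiv finSumFinEquiv
      (Matrix.fromBlocks (1 : Matrix (Fin 8) (Fin 8) ℤ) 0 0 (-1 : Matrix (Fin 8) (Fin 8) ℤ)) : Matrix (Fin 16) (Fin 16) ℤ) = Izt 8 := by
  decide +kernel

lemma toM16_map (Mz : Matrix (Fin 8 ⊕ Fin 8) (Fin 8 ⊕ Fin 8) ℤ) :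
    toM16 (Mz.map ((↑) : ℤ → ℝ)) =
      ((Matrix.reindex finSumFinEquiv finSumFinEquiv) Mz).map ((↑) : ℤ → ℝ) := by
  ext i j
  simp [toM16, Matrix.map_apply]

lemma blocks_eq (a : Fin 7) :
    ((Matrix.fromBlocks 0 (-(ez a)) (ez a) 0).map ((↑) : ℤ → ℝ)) =
      Matrix.fromBlocks 0 (-(e a)) (e a) 0 := by
  rw [Matrix.fromBlocks_map, czero, cneg, e_eq]


lemma I_eq (α : Fin 9) : I α = (Izt α).map ((↑) : ℤ → ℝ) := by
  fin_cases α
  · show toM16 (Matrix.fromBlocks 0 (-(e 0)) (e 0) 0) = (Izt 0).map ((↑) : ℤ → ℝ)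
    rw [← Iz_eq0, ← toM16_map, blocks_eq]
  · show toM16 (Matrix.fromBlocks 0 (-(e 1)) (e 1) 0) = (Izt 1).map ((↑) : ℤ → ℝ)
    rw [← Iz_eq1, ← toM16_map, blocks_eq]
  · show toM16 (Matrix.fromBlocks 0 (-(e 2)) (e 2) 0) = (Izt 2).map ((↑) : ℤ → ℝ)
    rw [← Iz_eq2, ← toM16_map, blocks_eq]
  · show toM16 (Matrix.fromBlocks 0 (-(e 3)) (e 3) 0) = (Izt 3).map ((↑) : ℤ → ℝ)
    rw [← Iz_eq3, ← toM16_map, blocks_eq]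
  · show toM16 (Matrix.fromBlocks 0 (-(e 4)) (e 4) 0) = (Izt 4).map ((↑) : ℤ → ℝ)
    rw [← Iz_eq4, ← toM16_map, blocks_eq]
  · show toM16 (Matrix.fromBlocks 0 (-(e 5)) (e 5) 0) = (Izt 5).map ((↑) : ℤ → ℝ)
    rw [← Iz_eq5, ← toM16_map, blocks_eq]
  · show toM16 (Matrix.fromBlocks 0 (-(e 6)) (e 6) 0) = (Izt 6).map ((↑) : ℤ → ℝ)
    rw [← Iz_eq6, ← toM16_map, blocks_eq]
  · show toM16 (Matrix.fromBlocks 0 1 1 0) = (Izt 7).map ((↑) : ℤ → ℝ)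
    rw [← Iz_eq7, ← toM16_map, Matrix.fromBlocks_map, czero, cone]
  · show toM16 (Matrix.fromBlocks 1 0 0 (-1)) = (Izt 8).map ((↑) : ℤ → ℝ)
    rw [← Iz_eq8, ← toM16_map, Matrix.fromBlocks_map, czero, cneg, cone]



-- ℝ-level signed-perm form of I
noncomputable def stR (α : Fin 9) : Fin 16 → ℝ := fun i => ((st α i : ℤ) : ℝ)

lemma I_SP (α : Fin 9) : I α = ofSP (pt α) (stR α) := by
  rw [I_eq α]
  show (ofSP (pt α) (st α)).map _ = _
  rw [ofSP_map]
  rfl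

lemma I_symm (α : Fin 9) : (I α)ᵀ = I α := by
  rw [I_SP]
  exact ofSP_transpose _ _ (pt_invol α) (fun i => by
    show ((st α (pt α i) : ℤ) : ℝ) = _
    rw [st_symm α i]; rfl)

lemma I_sq (α : Fin 9) : I α * I α = 1 := by
  rw [I_SP, ofSP_mul]
  have h1 : (fun i => pt α (pt α i)) = fun i : Fin 16 => i := funext (pt_invol α)
  have h2 : (fun i => stR α i * stR α (pt α i)) = fun _ : Fin 16 => (1 : ℝ) :=
    funext fun i => by
      show ((st α i : ℤ) : ℝ) * ((st α (pt α i) : ℤ) : ℝ) = 1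
      rw [← Int.cast_mul, st_sq α i, Int.cast_one]
  rw [h1, h2, ofSP_one]

lemma I_anti {α β : Fin 9} (h : α ≠ β) : I α * I β = -(I β * I α) := by
  rw [I_SP α, I_SP β, ofSP_mul, ofSP_mul, ofSP_neg]
  have hp : (fun i => pt β (pt α i)) = (fun i => pt α (pt β i)) :=
    funext fun i => (pt_st_anti α β h i).1
  have hs : (fun i => stR α i * stR β (pt α i)) =
      (fun i => -(stR β i * stR α (pt β i))) := funext fun i => by
    show ((st α i : ℤ) : ℝ) * ((st β (pt α i) : ℤ) : ℝ) =
      -(((st β i : ℤ) : ℝ) * ((st α (pt β i) : ℤ) : ℝ))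
    rw [← Int.cast_mul, ← Int.cast_mul, (pt_st_anti α β h i).2, Int.cast_neg]
  rw [hp, hs]

-- helpers for right-associated chains
lemma I_sq' (α : Fin 9) (X : Matrix (Fin 16) (Fin 16) ℝ) : I α * (I α * X) = X := by
  rw [← mul_assoc, I_sq, one_mul]

lemma I_anti' {α β : Fin 9} (h : α ≠ β) (X : Matrix (Fin 16) (Fin 16) ℝ) :
    I α * (I β * X) = -(I β * (I α * X)) := by
  rw [← mul_assoc, I_anti h, neg_mul, mul_assoc]

-- products over words
noncomputable def P (l : List (Fin 9)) : Matrix (Fin 16) (Fin 16) ℝ := (l.map I).prod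

lemma P_nil : P [] = 1 := rfl

lemma P_cons (x : Fin 9) (l : List (Fin 9)) : P (x :: l) = I x * P l := by
  simp [P]

lemma P_append (l1 l2 : List (Fin 9)) : P (l1 ++ l2) = P l1 * P l2 := by
  simp [P]

lemma conj_P (δ : Fin 9) (l : List (Fin 9)) :
    I δ * P l * I δ = ((-1 : ℝ) ^ (l.countP (fun x => x ≠ δ))) • P l := by
  induction l with
  | nil => simp [P_nil, I_sq]
  | cons x l ih =>
    have key : I δ * P (x :: l) * I δ = (I δ * I x * I δ) * (I δ * P l * I δ) := by
      rw [P_cons]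
      simp only [mul_assoc, I_sq']
    rw [key, ih]
    by_cases hx : x = δ
    · subst hx
      rw [I_sq, one_mul, List.countP_cons_of_neg (by simp), P_cons, mul_smul_comm]
    · have h1 : I δ * I x * I δ = -(I x) := by
        rw [I_anti (fun hc => hx hc.symm), neg_mul, mul_assoc, I_sq, mul_one]
      rw [h1, List.countP_cons_of_pos (by simpa using hx), P_cons, pow_succ]
      simp only [neg_mul, mul_smul_comm, mul_neg_one, neg_smul, smul_neg]
lemma trace_P_zero (l : List (Fin 9)) (δ : Fin 9) (h : Odd (l.countP (fun x => x ≠ δ))) :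
    Matrix.trace (P l) = 0 := by
  have h1 : Matrix.trace (I δ * P l * I δ) = Matrix.trace (P l) := by
    rw [Matrix.trace_mul_comm (I δ * P l) (I δ), ← mul_assoc, I_sq, one_mul]
  rw [conj_P, Odd.neg_one_pow h, Matrix.trace_smul, smul_eq_mul] at h1
  linarith


abbrev Idx := {p : Fin 9 × Fin 9 // p.1 < p.2} ⊕
      {t : Fin 9 × Fin 9 × Fin 9 // t.1 < t.2.1 ∧ t.2.1 < t.2.2}

def L : Idx → List (Fin 9) :=
  Sum.elim (fun p => [p.1.1, p.1.2]) (fun t => [t.1.1, t.1.2.1, t.1.2.2])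

lemma v_eq (i : Idx) : pairTripleFamily i = P (L i) := by
  cases i with
  | inl p =>
    show I p.1.1 * I p.1.2 = P [p.1.1, p.1.2]
    rw [P_cons, P_cons, P_nil, mul_one]
  | inr t =>
    show I t.1.1 * I t.1.2.1 * I t.1.2.2 = P [t.1.1, t.1.2.1, t.1.2.2]
    rw [P_cons, P_cons, P_cons, P_nil, mul_one, mul_assoc]

lemma L_sorted (i : Idx) : (L i).Pairwise (· < ·) := by
  cases i with
  | inl p => simpa [L, List.pairwise_cons] using p.2
  | inr t =>
    have h1 := t.2.1
    have h2 := t.2.2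
    simp [L, List.pairwise_cons]
    exact ⟨⟨h1, h1.trans h2⟩, h2⟩

lemma L_ne {i j : Idx} (h : i ≠ j) : L i ≠ L j := by
  intro he
  apply h
  cases i with
  | inl p =>
    cases j with
    | inl q =>
      simp only [L, Sum.elim_inl, List.cons.injEq, and_true] at he
      obtain ⟨h1, h2⟩ := he
      exact congrArg Sum.inl (Subtype.ext (Prod.ext h1 h2))
    | inr t => simp [L] at he
  | inr t =>
    cases j with
    | inl q => simp [L] at he
    | inr s =>
      simp only [L, Sum.elim_inr, List.cons.injEq, and_true] at he
      obtain ⟨h1, h2, h3⟩ := he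
      exact congrArg Sum.inr (Subtype.ext (Prod.ext h1 (Prod.ext h2 h3)))

lemma skew (i : Idx) : (pairTripleFamily i)ᵀ = -(pairTripleFamily i) := by
  cases i with
  | inl p =>
    obtain ⟨⟨a, b⟩, hab⟩ := p
    show (I a * I b)ᵀ = -(I a * I b)
    rw [Matrix.transpose_mul, I_symm, I_symm, I_anti (ne_of_gt hab)]
  | inr t =>
    obtain ⟨⟨a, b, c⟩, hab, hbc⟩ := t
    show (I a * I b * I c)ᵀ = -(I a * I b * I c)
    have hba : b ≠ a := ne_of_gt hab
    have hca : c ≠ a := ne_of_gt (hab.trans hbc)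
    have hcb : c ≠ b := ne_of_gt hbc
    rw [Matrix.transpose_mul, Matrix.transpose_mul, I_symm, I_symm, I_symm]
    calc I c * ((I b) * (I a))
        = I c * (-(I a * I b)) := by rw [I_anti hba]
      _ = -(I c * (I a * I b)) := by rw [mul_neg]
      _ = -((I c * I a) * I b) := by rw [mul_assoc]
      _ = -(-(I a * I c) * I b) := by rw [I_anti hca]
      _ = (I a * I c) * I b := by rw [neg_mul, neg_neg]
      _ = I a * (I c * I b) := by rw [mul_assoc]
      _ = I a * (-(I b * I c)) := by rw [I_anti hcb]
      _ = -(I a * (I b * I c)) := by rw [mul_neg]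
      _ = -(I a * I b * I c) := by rw [mul_assoc]

lemma vsq (i : Idx) : pairTripleFamily i * pairTripleFamily i = -1 := by
  cases i with
  | inl p =>
    obtain ⟨⟨a, b⟩, hab⟩ := p
    have hba : b ≠ a := ne_of_gt hab
    show (I a * I b) * (I a * I b) = -1
    simp only [mul_assoc]
    rw [I_anti' hba, mul_neg, I_sq', I_sq]
  | inr t =>
    obtain ⟨⟨a, b, c⟩, hab, hbc⟩ := t
    have hba : b ≠ a := ne_of_gt hab
    have hca : c ≠ a := ne_of_gt (hab.trans hbc)
    have hcb : c ≠ b := ne_of_gt hbc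
    show (I a * I b * I c) * (I a * I b * I c) = -1
    simp only [mul_assoc]
    rw [I_anti' hca, mul_neg, mul_neg, I_anti' hba, mul_neg, neg_neg, I_sq',
      I_anti' hcb, mul_neg, I_sq', I_sq]

-- counting
lemma countP_ne_add_count (δ : Fin 9) (l : List (Fin 9)) :
    l.countP (fun x => x ≠ δ) + l.count δ = l.length := by
  induction l with
  | nil => simp
  | cons x l ih =>
    by_cases h : x = δ
    · subst h
      rw [List.countP_cons_of_neg (by simp), List.count_cons_self, List.length_cons]
      omega
    · rw [List.countP_cons_of_pos (by simpa using h),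
        List.count_cons_of_ne h, List.length_cons]
      omega

lemma exists_delta (l1 l2 : List (Fin 9)) (h1 : l1.Pairwise (· < ·)) (h2 : l2.Pairwise (· < ·))
    (hne : l1 ≠ l2) (hlen : l1.length + l2.length ≤ 8) :
    ∃ δ, Odd ((l1 ++ l2).countP (fun x => x ≠ δ)) := by
  by_contra hc
  push_neg at hc
  have hev : ∀ δ, Even ((l1 ++ l2).countP (fun x => x ≠ δ)) :=
    fun δ => Nat.not_odd_iff_even.mp (hc δ)
  obtain ⟨δ0, hδ0⟩ : ∃ δ0 : Fin 9, δ0 ∉ (l1 ++ l2) := by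
    by_contra hall
    push_neg at hall
    have huniv : (l1 ++ l2).toFinset = Finset.univ :=
      Finset.eq_univ_iff_forall.mpr fun x => List.mem_toFinset.mpr (hall x)
    have hcard : (l1 ++ l2).toFinset.card ≤ (l1 ++ l2).length := (l1 ++ l2).toFinset_card_le
    rw [huniv, Finset.card_univ, List.length_append] at hcard
    simp [Fintype.card_fin] at hcard
    omega
  have hn : Even (l1.length + l2.length) := by
    have h := countP_ne_add_count δ0 (l1 ++ l2)
    rw [List.count_eq_zero.mpr hδ0, List.length_append] at h
    have := hev δ0
    rw [Nat.even_iff] at this ⊢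
    omega
  haveI : IsAntisymm (Fin 9) (· < ·) :=
    ⟨fun a b hab hba => absurd hba (not_lt.mpr hab.le)⟩
  have hcount : ∀ δ, l1.count δ = l2.count δ := by
    intro δ
    have e1 := countP_ne_add_count δ (l1 ++ l2)
    rw [List.count_append, List.length_append] at e1
    have e2 := hev δ
    have hc1 : l1.count δ ≤ 1 := List.nodup_iff_count_le_one.mp h1.nodup δ
    have hc2 : l2.count δ ≤ 1 := List.nodup_iff_count_le_one.mp h2.nodup δ
    rw [Nat.even_iff] at e2 hn
    omega
  exact hne (List.Perm.eq_of_pairwise (fun a b _ _ hab hba => absurd hba (not_lt.mpr hab.le)) h1 h2 (List.perm_iff_count.mpr hcount))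

lemma keytr (i j : Idx) :
    Matrix.trace ((pairTripleFamily j)ᵀ * pairTripleFamily i) =
      if i = j then (16 : ℝ) else 0 := by
  rw [skew j, Matrix.neg_mul, Matrix.trace_neg]
  by_cases h : i = j
  · subst h
    rw [if_pos rfl, vsq i, Matrix.trace_neg, Matrix.trace_one]
    norm_num
  · rw [if_neg h, v_eq, v_eq, ← P_append]
    obtain ⟨δ, hδ⟩ := exists_delta (L j) (L i) (L_sorted j) (L_sorted i)
      (L_ne (Ne.symm h)) (by cases i <;> cases j <;> simp [L])
    rw [trace_P_zero _ δ hδ, neg_zero]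

lemma hLI : LinearIndependent ℝ pairTripleFamily := by
  rw [Fintype.linearIndependent_iff]
  intro g hg j
  have h := congrArg (fun A => Matrix.trace ((pairTripleFamily j)ᵀ * A)) hg
  simp only [Matrix.mul_zero, Matrix.trace_zero] at h
  rw [Matrix.mul_sum, Matrix.trace_sum] at h
  simp only [Matrix.mul_smul, Matrix.trace_smul, keytr, smul_eq_mul, mul_ite, mul_zero] at h
  rw [Finset.sum_ite_eq' Finset.univ j] at h
  simp at h
  exact h

-- elementary skew matrices
noncomputable def wfam : {p : Fin 16 × Fin 16 // p.1 < p.2} → Matrix (Fin 16) (Fin 16) ℝ :=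
  fun p => Matrix.single p.1.1 p.1.2 1 - Matrix.single p.1.2 p.1.1 1

lemma std_apply (i j a b : Fin 16) (v : ℝ) :
    Matrix.single i j v a b = if i = a ∧ j = b then v else 0 := rfl

lemma mem_span_wfam {A : Matrix (Fin 16) (Fin 16) ℝ} (hA : Aᵀ = -A) :
    A ∈ Submodule.span ℝ (Set.range wfam) := by
  have hrep : A = ∑ p : {p : Fin 16 × Fin 16 // p.1 < p.2}, A p.1.1 p.1.2 • wfam p := by
    ext i j
    rw [Matrix.sum_apply]
    rcases lt_trichotomy i j with hij | hij | hij
    · rw [Finset.sum_eq_single (⟨(i, j), hij⟩ : {p : Fin 16 × Fin 16 // p.1 < p.2})]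
      · simp [wfam, std_apply, Matrix.smul_apply, (ne_of_lt hij)]
      · intro b _ hb
        have hb1 : ¬(b.1.1 = i ∧ b.1.2 = j) := by
          intro hc
          exact hb (Subtype.ext (Prod.ext hc.1 hc.2))
        have hb2 : ¬(b.1.2 = i ∧ b.1.1 = j) := by
          intro hc
          have := b.2
          rw [hc.1, hc.2] at this
          exact absurd hij (not_lt.mpr this.le)
        simp [wfam, std_apply, Matrix.smul_apply, hb1, hb2]
      · simp
    · subst hij
      have hAii : A i i = 0 := by
        have h := congrFun (congrFun hA i) i
        simp [Matrix.transpose_apply, Matrix.neg_apply] at h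
        linarith
      rw [Finset.sum_eq_zero, hAii]
      intro b _
      have hb1 : ¬(b.1.1 = i ∧ b.1.2 = i) := by
        intro hc
        have := b.2
        rw [hc.1, hc.2] at this
        exact lt_irrefl _ this
      have hb2 : ¬(b.1.2 = i ∧ b.1.1 = i) := by
        intro hc
        exact hb1 ⟨hc.2, hc.1⟩
      simp [wfam, std_apply, Matrix.smul_apply, hb1, hb2]
    · rw [Finset.sum_eq_single (⟨(j, i), hij⟩ : {p : Fin 16 × Fin 16 // p.1 < p.2})]
      · have h := congrFun (congrFun hA j) i
        simp only [Matrix.transpose_apply, Matrix.neg_apply] at h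
        simp [wfam, std_apply, Matrix.smul_apply, (ne_of_lt hij)]
        linarith
      · intro b _ hb
        have hb1 : ¬(b.1.1 = i ∧ b.1.2 = j) := by
          intro hc
          have := b.2
          rw [hc.1, hc.2] at this
          exact absurd hij (not_lt.mpr this.le)
        have hb2 : ¬(b.1.2 = i ∧ b.1.1 = j) := by
          intro hc
          exact hb (Subtype.ext (Prod.ext hc.2 hc.1))
        simp [wfam, std_apply, Matrix.smul_apply, hb1, hb2]
      · simp
  rw [hrep]
  exact Submodule.sum_mem _ fun p _ =>
    Submodule.smul_mem _ _ (Submodule.subset_span ⟨p, rfl⟩)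

noncomputable def U : Submodule ℝ (Matrix (Fin 16) (Fin 16) ℝ) where
  carrier := {A | Aᵀ = -A}
  add_mem' := by
    intro a b ha hb
    simp only [Set.mem_setOf_eq] at *
    rw [Matrix.transpose_add, ha, hb, neg_add]
  zero_mem' := by simp
  smul_mem' := by
    intro c a ha
    simp only [Set.mem_setOf_eq] at *
    rw [Matrix.transpose_smul, ha, smul_neg]


set_option maxRecDepth 100000 in
/-- The 36 matrices `I_α I_β` (`α < β`) together with the 84 matrices `I_α I_β I_γ`
(`α < β < γ`) are skew-symmetric and linearly independent over `ℝ`, and they span the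
space of all skew-symmetric 16×16 real matrices (the Lie algebra `so(16)`);
hence these 120 matrices form a basis of that space. -/
theorem pairTriple_basis_of_so16 :
    (∀ idx, (pairTripleFamily idx)ᵀ = -(pairTripleFamily idx)) ∧
    LinearIndependent ℝ pairTripleFamily ∧
    (Submodule.span ℝ (Set.range pairTripleFamily) : Set (Matrix (Fin 16) (Fin 16) ℝ)) =
      {A : Matrix (Fin 16) (Fin 16) ℝ | Aᵀ = -A} := by
  refine ⟨skew, hLI, ?_⟩
  have hle : Submodule.span ℝ (Set.range pairTripleFamily) ≤ U := by
    rw [Submodule.span_le]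
    rintro x ⟨i, rfl⟩
    exact skew i
  have hUle : U ≤ Submodule.span ℝ (Set.range wfam) := fun A hA => mem_span_wfam hA
  have hcard1 : Fintype.card Idx = 120 := by
    rw [Fintype.card_sum, Fintype.card_subtype, Fintype.card_subtype]
    decide
  have hcard2 : Fintype.card {p : Fin 16 × Fin 16 // p.1 < p.2} = 120 := by
    rw [Fintype.card_subtype]
    decide
  have h1 : Module.finrank ℝ (Submodule.span ℝ (Set.range pairTripleFamily)) = 120 := by
    rw [finrank_span_eq_card hLI, hcard1]
  have h2 : Module.finrank ℝ U ≤ 120 := by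
    refine le_trans (Submodule.finrank_mono hUle) (le_trans ?_ (le_of_eq hcard2))
    have h := finrank_range_le_card (R := ℝ) wfam
    rw [Set.finrank] at h
    exact h
  have hfinal : Submodule.span ℝ (Set.range pairTripleFamily) = U :=
    Submodule.eq_of_le_of_finrank_le hle (h2.trans h1.ge)
  rw [hfinal]
  rfl


end Spin9
end

section
/- Real numbers a, b, c, d satisfy the eight equations (a+b+c−d)² = 1, (a+b+c+d)² = 1, (a+b−c+d)² = 1, (a+b−c−d)² = 1, (a−b+c+d)² = 1, (a−b+c−d)² = 1, (−a+b+c+d)² = 1, (−a+b+c−d)² = 1 if and only if (a,b,c,d) is one of the eight signed unit vectors (±1,0,0,0), (0,±1,0,0), (0,0,±1,0), (0,0,0,±1). -/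
/-- Real numbers `a, b, c, d` satisfy the eight equations `(±a ± b ± c ± d)² = 1`
(with the listed sign patterns) if and only if `(a,b,c,d)` is one of the eight signed
unit vectors `(±1,0,0,0)`, `(0,±1,0,0)`, `(0,0,±1,0)`, `(0,0,0,±1)`. -/
theorem eight_equations_iff_signed_unit_vector (a b c d : ℝ) :
    ((a + b + c - d) ^ 2 = 1 ∧ (a + b + c + d) ^ 2 = 1 ∧
     (a + b - c + d) ^ 2 = 1 ∧ (a + b - c - d) ^ 2 = 1 ∧
     (a - b + c + d) ^ 2 = 1 ∧ (a - b + c - d) ^ 2 = 1 ∧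
     (-a + b + c + d) ^ 2 = 1 ∧ (-a + b + c - d) ^ 2 = 1) ↔
    ((a, b, c, d) = (1, 0, 0, 0) ∨ (a, b, c, d) = (-1, 0, 0, 0) ∨
     (a, b, c, d) = (0, 1, 0, 0) ∨ (a, b, c, d) = (0, -1, 0, 0) ∨
     (a, b, c, d) = (0, 0, 1, 0) ∨ (a, b, c, d) = (0, 0, -1, 0) ∨
     (a, b, c, d) = (0, 0, 0, 1) ∨ (a, b, c, d) = (0, 0, 0, -1)) := by
  constructor
  · rintro ⟨h1, h2, h3, h4, h5, h6, h7, h8⟩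
    have s : ∀ x : ℝ, x ^ 2 = 1 → x = 1 ∨ x = -1 := by
      intro x hx
      rcases mul_eq_zero.mp (show (x - 1) * (x + 1) = 0 by nlinarith) with h | h
      · left; linarith
      · right; linarith
    rcases s _ h1 with h1 | h1 <;> rcases s _ h2 with h2 | h2 <;>
      rcases s _ h3 with h3 | h3 <;> rcases s _ h5 with h5 | h5 <;>
      rcases s _ h7 with h7 | h7 <;>
    · have ha' : a = ((a + b + c + d) - (-a + b + c + d)) / 2 := by ring
      have hb' : b = ((a + b + c + d) - (a - b + c + d)) / 2 := by ring
      have hc' : c = ((a + b + c + d) - (a + b - c + d)) / 2 := by ring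
      have hd' : d = ((a + b + c + d) - (a + b + c - d)) / 2 := by ring
      rw [h2, h7] at ha'
      rw [h2, h5] at hb'
      rw [h2, h3] at hc'
      rw [h2, h1] at hd'
      norm_num at ha' hb' hc' hd'
      subst ha' hb' hc' hd'
      revert h1 h3 h5 h7 h4 h6 h8; norm_num [Prod.mk.injEq]
  · rintro (h | h | h | h | h | h | h | h) <;>
      (injection h with h1 h; injection h with h2 h; injection h with h3 h4;
       subst h1; subst h2; subst h3; subst h4; norm_num)
end

section
/- For real numbers a, b, c, d, the 16×16 real matrix J = a·I₁I₂ + b·I₃I₄ + c·I₅I₆ + d·I₇I₈ satisfies J² = −Id if and only if (a,b,c,d) is one of the eight signed unit vectors (±1,0,0,0), (0,±1,0,0), (0,0,±1,0), (0,0,0,±1). -/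
open Matrix

namespace Spin9

noncomputable def S (i j : Fin 8) : Matrix (Fin 8) (Fin 8) ℝ := Matrix.single i j 1

noncomputable def Y (p q r s : ℝ) : Matrix (Fin 8) (Fin 8) ℝ :=
  p • E8 0 1 + q • E8 2 3 + r • E8 4 5 + s • E8 6 7

lemma p01 : e 0 * e 1 = -(Y 1 1 1 1) := by
  show (E8 0 7 + E8 1 6 - E8 2 5 - E8 3 4) * (-E8 0 6 + E8 1 7 + E8 2 4 - E8 3 5) = _
  simp (config := { decide := true }) only [Y, one_smul, E8, sub_mul, mul_sub, add_mul, mul_add,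
    neg_mul, mul_neg, Matrix.single_mul_single_same, Matrix.single_mul_single_of_ne,
    ne_eq, Fin.isValue]
  norm_num
  abel

lemma p23 : e 2 * e 3 = -(Y 1 1 (-1) (-1)) := by
  show (-E8 0 5 + E8 1 4 - E8 2 7 + E8 3 6) * (-E8 0 4 - E8 1 5 - E8 2 6 - E8 3 7) = _
  simp (config := { decide := true }) only [Y, one_smul, neg_smul, E8, sub_mul, mul_sub,
    add_mul, mul_add, neg_mul, mul_neg, Matrix.single_mul_single_same,
    Matrix.single_mul_single_of_ne, ne_eq, Fin.isValue]
  norm_num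
  abel

lemma p45 : e 4 * e 5 = -(Y 1 (-1) 1 (-1)) := by
  show (-E8 0 2 - E8 1 3 + E8 4 6 + E8 5 7) * (E8 0 3 - E8 1 2 - E8 4 7 + E8 5 6) = _
  simp (config := { decide := true }) only [Y, one_smul, neg_smul, E8, sub_mul, mul_sub,
    add_mul, mul_add, neg_mul, mul_neg, Matrix.single_mul_single_same,
    Matrix.single_mul_single_of_ne, ne_eq, Fin.isValue]
  norm_num
  abel

lemma he6 : e 6 = Y 1 (-1) (-1) 1 := by
  show E8 0 1 - E8 2 3 - E8 4 5 + E8 6 7 = _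
  simp only [Y, one_smul, neg_smul]
  abel

lemma one_eq_sum : (1 : Matrix (Fin 8) (Fin 8) ℝ) =
    S 0 0 + S 1 1 + S 2 2 + S 3 3 + S 4 4 + S 5 5 + S 6 6 + S 7 7 := by
  ext i j
  simp only [S, Matrix.one_apply, Matrix.add_apply, Matrix.single, Matrix.of_apply]
  fin_cases i <;> fin_cases j <;> simp

lemma Ysq (p q r s : ℝ) : Y p q r s * Y p q r s =
    -((p * p) • (S 0 0 + S 1 1) + (q * q) • (S 2 2 + S 3 3) +
      (r * r) • (S 4 4 + S 5 5) + (s * s) • (S 6 6 + S 7 7)) := by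
  simp (config := { decide := true }) only [Y, S, E8, sub_mul, mul_sub, add_mul, mul_add,
    smul_mul_assoc, mul_smul_comm, smul_smul, smul_sub, smul_add, smul_neg,
    Matrix.single_mul_single_same, Matrix.single_mul_single_of_ne, ne_eq, Fin.isValue,
    mul_one, smul_zero]
  module

lemma Ysq_eq_neg_one_iff (p q r s : ℝ) :
    Y p q r s * Y p q r s = -1 ↔ p * p = 1 ∧ q * q = 1 ∧ r * r = 1 ∧ s * s = 1 := by
  rw [Ysq, neg_eq_iff_eq_neg, neg_neg]
  constructor
  · intro h
    have h00 := congrFun (congrFun h 0) 0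
    have h22 := congrFun (congrFun h 2) 2
    have h44 := congrFun (congrFun h 4) 4
    have h66 := congrFun (congrFun h 6) 6
    simp (config := { decide := true }) [S, Matrix.one_apply, Matrix.add_apply,
      Matrix.smul_apply, Matrix.single] at h00 h22 h44 h66
    exact ⟨h00, h22, h44, h66⟩
  · rintro ⟨hp, hq, hr, hs⟩
    rw [hp, hq, hr, hs, one_eq_sum]
    simp only [one_smul]
    abel

lemma toM16_mul (M N : Matrix (Fin 8 ⊕ Fin 8) (Fin 8 ⊕ Fin 8) ℝ) :
    toM16 M * toM16 N = toM16 (M * N) := by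
  simp [toM16, Matrix.reindex_apply, Matrix.submatrix_mul_equiv]

lemma toM16_smul (a : ℝ) (M : Matrix (Fin 8 ⊕ Fin 8) (Fin 8 ⊕ Fin 8) ℝ) :
    a • toM16 M = toM16 (a • M) := by
  simp [toM16, Matrix.reindex_apply, Matrix.submatrix_smul]

lemma toM16_add (M N : Matrix (Fin 8 ⊕ Fin 8) (Fin 8 ⊕ Fin 8) ℝ) :
    toM16 M + toM16 N = toM16 (M + N) := by
  simp [toM16, Matrix.reindex_apply, Matrix.submatrix_add]

lemma toM16_neg_one : (-1 : Matrix (Fin 16) (Fin 16) ℝ) = toM16 (-1) := by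
  simp [toM16, Matrix.reindex_apply, Matrix.submatrix_neg, Matrix.submatrix_one_equiv]

lemma hI01 : I 0 * I 1 = toM16 (Matrix.fromBlocks (Y 1 1 1 1) 0 0 (Y 1 1 1 1)) := by
  show toM16 (Matrix.fromBlocks 0 (-(e 0)) (e 0) 0) *
      toM16 (Matrix.fromBlocks 0 (-(e 1)) (e 1) 0) = _
  rw [toM16_mul, Matrix.fromBlocks_multiply]
  simp [p01]

lemma hI23 : I 2 * I 3 = toM16 (Matrix.fromBlocks (Y 1 1 (-1) (-1)) 0 0 (Y 1 1 (-1) (-1))) := by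
  show toM16 (Matrix.fromBlocks 0 (-(e 2)) (e 2) 0) *
      toM16 (Matrix.fromBlocks 0 (-(e 3)) (e 3) 0) = _
  rw [toM16_mul, Matrix.fromBlocks_multiply]
  simp [p23]

lemma hI45 : I 4 * I 5 = toM16 (Matrix.fromBlocks (Y 1 (-1) 1 (-1)) 0 0 (Y 1 (-1) 1 (-1))) := by
  show toM16 (Matrix.fromBlocks 0 (-(e 4)) (e 4) 0) *
      toM16 (Matrix.fromBlocks 0 (-(e 5)) (e 5) 0) = _
  rw [toM16_mul, Matrix.fromBlocks_multiply]
  simp [p45]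

lemma hI67 : I 6 * I 7 = toM16 (Matrix.fromBlocks (-(Y 1 (-1) (-1) 1)) 0 0 (Y 1 (-1) (-1) 1)) := by
  show toM16 (Matrix.fromBlocks 0 (-(e 6)) (e 6) 0) *
      toM16 (Matrix.fromBlocks 0 1 1 0) = _
  rw [toM16_mul, Matrix.fromBlocks_multiply]
  simp [he6]

lemma Y_comb (a b c d : ℝ) :
    a • Y 1 1 1 1 + b • Y 1 1 (-1) (-1) + c • Y 1 (-1) 1 (-1) + d • Y 1 (-1) (-1) 1 =
    Y (a + b + c + d) (a + b - c - d) (a - b + c - d) (a - b - c + d) := by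
  simp only [Y, smul_add, smul_smul]
  module

lemma scalar_iff (a b c d : ℝ) :
    ((a+b+c-d)*(a+b+c-d) = 1 ∧ (a+b-c+d)*(a+b-c+d) = 1 ∧
     (a-b+c+d)*(a-b+c+d) = 1 ∧ (a-b-c-d)*(a-b-c-d) = 1) ∧
    ((a+b+c+d)*(a+b+c+d) = 1 ∧ (a+b-c-d)*(a+b-c-d) = 1 ∧
     (a-b+c-d)*(a-b+c-d) = 1 ∧ (a-b-c+d)*(a-b-c+d) = 1) ↔
    ((a, b, c, d) = (1, 0, 0, 0) ∨ (a, b, c, d) = (-1, 0, 0, 0) ∨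
     (a, b, c, d) = (0, 1, 0, 0) ∨ (a, b, c, d) = (0, -1, 0, 0) ∨
     (a, b, c, d) = (0, 0, 1, 0) ∨ (a, b, c, d) = (0, 0, -1, 0) ∨
     (a, b, c, d) = (0, 0, 0, 1) ∨ (a, b, c, d) = (0, 0, 0, -1)) := by
  constructor
  · rintro ⟨⟨h1, h2, h3, h4⟩, h5, h6, h7, h8⟩
    have hs : a^2 + b^2 + c^2 + d^2 = 1 := by
      linear_combination (h1 + h2 + h3 + h4 + h5 + h6 + h7 + h8) / 8
    have hab : a * b = 0 := by
      linear_combination (h1 + h2 + h5 + h6 - h3 - h4 - h7 - h8) / 16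
    have hac : a * c = 0 := by
      linear_combination (h1 - h2 + h3 - h4 + h5 - h6 + h7 - h8) / 16
    have had : a * d = 0 := by
      linear_combination (-h1 + h2 + h3 - h4 + h5 - h6 - h7 + h8) / 16
    have hbc : b * c = 0 := by
      linear_combination (h1 - h2 - h3 + h4 + h5 - h6 - h7 + h8) / 16
    have hbd : b * d = 0 := by
      linear_combination (-h1 + h2 - h3 + h4 + h5 - h6 + h7 - h8) / 16
    have hcd : c * d = 0 := by
      linear_combination (-h1 - h2 + h3 + h4 + h5 + h6 - h7 - h8) / 16
    by_cases ha : a = 0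
    · by_cases hb : b = 0
      · by_cases hc : c = 0
        · have : d * d = 1 := by subst ha hb hc; linear_combination hs
          rcases mul_self_eq_one_iff.mp this with hd | hd <;> subst ha hb hc hd <;> simp
        · have hd : d = 0 := by
            rcases mul_eq_zero.mp hcd with h | h
            · exact absurd h hc
            · exact h
          have : c * c = 1 := by subst ha hb hd; linear_combination hs
          rcases mul_self_eq_one_iff.mp this with hc' | hc' <;> subst ha hb hd hc' <;> simp
      · have hc : c = 0 := by
          rcases mul_eq_zero.mp hbc with h | h
          · exact absurd h hb
          · exact h
        have hd : d = 0 := by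
          rcases mul_eq_zero.mp hbd with h | h
          · exact absurd h hb
          · exact h
        have : b * b = 1 := by subst ha hc hd; linear_combination hs
        rcases mul_self_eq_one_iff.mp this with hb' | hb' <;> subst ha hc hd hb' <;> simp
    · have hb : b = 0 := by
        rcases mul_eq_zero.mp hab with h | h
        · exact absurd h ha
        · exact h
      have hc : c = 0 := by
        rcases mul_eq_zero.mp hac with h | h
        · exact absurd h ha
        · exact h
      have hd : d = 0 := by
        rcases mul_eq_zero.mp had with h | h
        · exact absurd h ha
        · exact h
      have : a * a = 1 := by subst hb hc hd; linear_combination hs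
      rcases mul_self_eq_one_iff.mp this with ha' | ha' <;> subst hb hc hd ha' <;> simp
  · intro h
    rcases h with h | h | h | h | h | h | h | h <;>
      (simp only [Prod.mk.injEq] at h; obtain ⟨h1, h2, h3, h4⟩ := h; subst h1 h2 h3 h4) <;>
      norm_num

/-- The 16×16 real matrix `J = a·I₁I₂ + b·I₃I₄ + c·I₅I₆ + d·I₇I₈` satisfies `J² = -Id`
if and only if `(a,b,c,d)` is one of the eight signed unit vectors
`(±1,0,0,0)`, `(0,±1,0,0)`, `(0,0,±1,0)`, `(0,0,0,±1)`. -/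
theorem J_sq_eq_neg_one_iff (a b c d : ℝ) :
    (a • (I 0 * I 1) + b • (I 2 * I 3) + c • (I 4 * I 5) + d • (I 6 * I 7)) *
      (a • (I 0 * I 1) + b • (I 2 * I 3) + c • (I 4 * I 5) + d • (I 6 * I 7)) = -1 ↔
    ((a, b, c, d) = (1, 0, 0, 0) ∨ (a, b, c, d) = (-1, 0, 0, 0) ∨
     (a, b, c, d) = (0, 1, 0, 0) ∨ (a, b, c, d) = (0, -1, 0, 0) ∨
     (a, b, c, d) = (0, 0, 1, 0) ∨ (a, b, c, d) = (0, 0, -1, 0) ∨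
     (a, b, c, d) = (0, 0, 0, 1) ∨ (a, b, c, d) = (0, 0, 0, -1)) := by
  have hJ : a • (I 0 * I 1) + b • (I 2 * I 3) + c • (I 4 * I 5) + d • (I 6 * I 7) =
      toM16 (Matrix.fromBlocks
        (Y (a + b + c - d) (a + b - c + d) (a - b + c + d) (a - b - c - d)) 0 0
        (Y (a + b + c + d) (a + b - c - d) (a - b + c - d) (a - b - c + d))) := by
    rw [hI01, hI23, hI45, hI67, toM16_smul, toM16_smul, toM16_smul, toM16_smul,
      toM16_add, toM16_add, toM16_add]
    congr 1
    simp only [Matrix.fromBlocks_smul, Matrix.fromBlocks_add, smul_zero, add_zero, smul_neg,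
      zero_add]
    rw [Matrix.fromBlocks_inj]
    refine ⟨?_, rfl, rfl, ?_⟩ <;>
      · simp only [Y, smul_neg, smul_add, smul_smul]
        module
  rw [hJ, toM16_mul, Matrix.fromBlocks_multiply, toM16_neg_one]
  have hinj : Function.Injective toM16 := toM16.injective
  rw [hinj.eq_iff]
  have h1 : (-1 : Matrix (Fin 8 ⊕ Fin 8) (Fin 8 ⊕ Fin 8) ℝ) =
      Matrix.fromBlocks (-1) 0 0 (-1) := by
    rw [← Matrix.fromBlocks_one, Matrix.fromBlocks_neg]
    norm_num
  rw [h1]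
  simp only [Matrix.mul_zero, Matrix.zero_mul, add_zero, zero_add]
  rw [Matrix.fromBlocks_inj]
  rw [← scalar_iff a b c d]
  constructor
  · rintro ⟨hX, _, _, hZ⟩
    exact ⟨(Ysq_eq_neg_one_iff _ _ _ _).mp hX, (Ysq_eq_neg_one_iff _ _ _ _).mp hZ⟩
  · rintro ⟨hX, hZ⟩
    exact ⟨(Ysq_eq_neg_one_iff _ _ _ _).mpr hX, rfl, rfl,
      (Ysq_eq_neg_one_iff _ _ _ _).mpr hZ⟩
end Spin9
end

section
/- With μ₁,…,μ₈ the eight weights of the 16-dimensional spin representation of Spin(9), the identity Σ_{1≤α<β≤8} μ_α²·μ_β² = (7/4)·(θ₁²+θ₂²+θ₃²+θ₄²)² − Σ_{1≤i<j≤4} θ_i²·θ_j² holds for all real θ₁, θ₂, θ₃, θ₄. (This proves p₂(M¹⁶) = (7/4)p₁²(V⁹) − p₂(V⁹) for a compact 16-manifold with Spin(9)-structure.) -/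
namespace Spin9

/-- The eight weights `μ₁, …, μ₈` of the 16-dimensional spin representation of `Spin(9)`,
expressed in the coordinates `θ₁, …, θ₄` of a maximal torus
(indexed by `Fin 8`, so `μ θ₁ θ₂ θ₃ θ₄ 0 = μ₁`, …). -/
noncomputable def μ (θ₁ θ₂ θ₃ θ₄ : ℝ) : Fin 8 → ℝ :=
  ![(θ₁ + θ₂ + θ₃ + θ₄) / 2,
    (θ₁ + θ₂ + θ₃ - θ₄) / 2,
    (θ₁ + θ₂ - θ₃ + θ₄) / 2,
    (θ₁ - θ₂ + θ₃ + θ₄) / 2,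
    (-θ₁ + θ₂ + θ₃ + θ₄) / 2,
    (θ₁ + θ₂ - θ₃ - θ₄) / 2,
    (θ₁ - θ₂ + θ₃ - θ₄) / 2,
    (-θ₁ + θ₂ + θ₃ - θ₄) / 2]

/-- `∑_{α<β} μ_α² μ_β² = (7/4)(θ₁²+θ₂²+θ₃²+θ₄²)² − ∑_{i<j} θ_i² θ_j²`: the second
Pontrjagin class of a compact 16-manifold with `Spin(9)`-structure satisfies
`p₂(M¹⁶) = (7/4)p₁²(V⁹) − p₂(V⁹)`. -/
theorem sum_mu_sq_pairs (θ₁ θ₂ θ₃ θ₄ : ℝ) :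
    ∑ p ∈ Finset.univ.filter (fun p : Fin 8 × Fin 8 => p.1 < p.2),
        (μ θ₁ θ₂ θ₃ θ₄ p.1) ^ 2 * (μ θ₁ θ₂ θ₃ θ₄ p.2) ^ 2 =
      7 / 4 * (θ₁ ^ 2 + θ₂ ^ 2 + θ₃ ^ 2 + θ₄ ^ 2) ^ 2 -
        (θ₁ ^ 2 * θ₂ ^ 2 + θ₁ ^ 2 * θ₃ ^ 2 + θ₁ ^ 2 * θ₄ ^ 2 +
         θ₂ ^ 2 * θ₃ ^ 2 + θ₂ ^ 2 * θ₄ ^ 2 + θ₃ ^ 2 * θ₄ ^ 2) := by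
  rw [Finset.sum_filter]
  rw [Fintype.sum_prod_type]
  simp only [Fin.sum_univ_succ, Fin.sum_univ_zero, μ, Fin.lt_def, Fin.val_zero, Fin.val_one, Matrix.cons_val_zero, Matrix.cons_val_succ]
  norm_num [Fin.lt_def]
  ring

end Spin9
end

section
/- With μ₁,…,μ₈ the eight weights of the 16-dimensional spin representation of Spin(9), and with e₁, e₂, e₃, e₄ the elementary symmetric polynomials in θ₁², θ₂², θ₃², θ₄², the identity μ₁·μ₂·μ₃·μ₄·μ₅·μ₆·μ₇·μ₈ = (1/256)·e₁⁴ − (1/32)·e₁²·e₂ + (1/16)·e₂² − (1/4)·e₄ holds for all real θ₁, θ₂, θ₃, θ₄. (This proves the Euler class formula e(M¹⁶) = (1/256)p₁⁴(V⁹) − (1/32)p₁²(V⁹)p₂(V⁹) + (1/16)p₂²(V⁹) − (1/4)p₄(V⁹) for a compact 16-manifold with Spin(9)-structure.) -/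
namespace Spin9

/-- With `e₁, e₂, e₃, e₄` the elementary symmetric polynomials in `θ₁², θ₂², θ₃², θ₄²`,
one has `μ₁μ₂⋯μ₈ = (1/256)e₁⁴ − (1/32)e₁²e₂ + (1/16)e₂² − (1/4)e₄`: this proves the
Euler class formula `e(M¹⁶) = (1/256)p₁⁴(V⁹) − (1/32)p₁²(V⁹)p₂(V⁹) + (1/16)p₂²(V⁹)
− (1/4)p₄(V⁹)` for a compact 16-manifold with `Spin(9)`-structure. -/
theorem prod_mu (θ₁ θ₂ θ₃ θ₄ : ℝ) :
    ∏ α : Fin 8, μ θ₁ θ₂ θ₃ θ₄ α =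
      1 / 256 * (θ₁ ^ 2 + θ₂ ^ 2 + θ₃ ^ 2 + θ₄ ^ 2) ^ 4 -
      1 / 32 * (θ₁ ^ 2 + θ₂ ^ 2 + θ₃ ^ 2 + θ₄ ^ 2) ^ 2 *
        (θ₁ ^ 2 * θ₂ ^ 2 + θ₁ ^ 2 * θ₃ ^ 2 + θ₁ ^ 2 * θ₄ ^ 2 +
         θ₂ ^ 2 * θ₃ ^ 2 + θ₂ ^ 2 * θ₄ ^ 2 + θ₃ ^ 2 * θ₄ ^ 2) +
      1 / 16 * (θ₁ ^ 2 * θ₂ ^ 2 + θ₁ ^ 2 * θ₃ ^ 2 + θ₁ ^ 2 * θ₄ ^ 2 +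
                θ₂ ^ 2 * θ₃ ^ 2 + θ₂ ^ 2 * θ₄ ^ 2 + θ₃ ^ 2 * θ₄ ^ 2) ^ 2 -
      1 / 4 * (θ₁ ^ 2 * θ₂ ^ 2 * θ₃ ^ 2 * θ₄ ^ 2) := by
  rw [Fin.prod_univ_eight]
  show (θ₁ + θ₂ + θ₃ + θ₄) / 2 * ((θ₁ + θ₂ + θ₃ - θ₄) / 2) * ((θ₁ + θ₂ - θ₃ + θ₄) / 2) *
      ((θ₁ - θ₂ + θ₃ + θ₄) / 2) * ((-θ₁ + θ₂ + θ₃ + θ₄) / 2) * ((θ₁ + θ₂ - θ₃ - θ₄) / 2) *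
      ((θ₁ - θ₂ + θ₃ - θ₄) / 2) * ((-θ₁ + θ₂ + θ₃ - θ₄) / 2) = _
  ring

end Spin9
end

section
/- Let A, B, C, D, x, y be real numbers satisfying the six equations A + xC = 1, −A + yC = 2, 2A + (x−y)C = −1, B + xD = −y, −B + yD = x − y, and 2B + (x−y)D = −x. Then D = −1 − A, B·C = −(1 + A + A²), x·(1 + A + A²) = (A − 1)·B, y·(1 + A + A²) = −(2 + A)·B, and C·(x − y) = 1 + 2D. -/
/-- If real numbers `A, B, C, D, x, y` satisfy the six equations encoding the action of the
triality automorphism of `Spin(8)` on `π₇(Spin(8)) ≅ ℤ ⊕ ℤ`, then `D = −1−A`,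
`BC = −(1+A+A²)`, `x(1+A+A²) = (A−1)B`, `y(1+A+A²) = −(2+A)B`, and `C(x−y) = 1+2D`. -/
theorem triality_system (A B C D x y : ℝ)
    (h1 : A + x * C = 1) (h2 : -A + y * C = 2) (h3 : 2 * A + (x - y) * C = -1)
    (h4 : B + x * D = -y) (h5 : -B + y * D = x - y) (h6 : 2 * B + (x - y) * D = -x) :
    D = -1 - A ∧
    B * C = -(1 + A + A ^ 2) ∧
    x * (1 + A + A ^ 2) = (A - 1) * B ∧
    y * (1 + A + A ^ 2) = -(2 + A) * B ∧
    C * (x - y) = 1 + 2 * D := by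
  have hD : D = -1 - A := by
    linear_combination (C * h4 + C * h5 - D * h1 - D * h2 + h1 - 2 * h2) / 3
  subst hD
  have hBC : B * C = -(1 + A + A ^ 2) := by
    linear_combination C * h4 + (1 + A) * h1 - h2
  refine ⟨rfl, hBC, ?_, ?_, ?_⟩
  · linear_combination x * hBC - B * h1
  · linear_combination y * hBC - B * h2
  · linear_combination h1 - h2
end

section
/- Let I₁,…,I₉ be the explicit 16×16 real matrices of the standard Spin(9)-structure on ℝ¹⁶, and let J = Σ_{1≤α<β≤9} x_{αβ}·I_αI_β (with real coefficients x_{αβ}) satisfy J² = −Id. Then for every ω = Σ_{1≤α<β≤9} y_{αβ}·I_αI_β with real coefficients y_{αβ}, the identity [J, [J, [J, ω]]] = −4·[J, ω] holds, where [P,Q] = PQ − QP. (Equivalently, on the orthogonal complement of the stabilizer h_J inside spin(9), the double commutator satisfies [J,[J,ω]] = −4ω, so that (1/2)ad(J) is a complex structure on the tangent space of the twistor fibre 𝒯₁.) -/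
open Matrix

namespace Spin9

/-- The set of pairs `(α, β)` with `α < β` in `Fin 9`. -/
noncomputable def pairs : Finset (Fin 9 × Fin 9) :=
  Finset.univ.filter fun p => p.1 < p.2

/-- The set of triples `(α, β, γ)` with `α < β < γ` in `Fin 9`. -/
noncomputable def triples : Finset (Fin 9 × Fin 9 × Fin 9) :=
  Finset.univ.filter fun t => t.1 < t.2.1 ∧ t.2.1 < t.2.2

/-- The matrix commutator `[P,Q] = PQ − QP`. -/
noncomputable def comm (P Q : Matrix (Fin 16) (Fin 16) ℝ) : Matrix (Fin 16) (Fin 16) ℝ :=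
  P * Q - Q * P

/-- For every `J = ∑_{α<β} x_{αβ} I_αI_β` with `J² = −Id` and every
`ω = ∑_{α<β} y_{αβ} I_αI_β` in `spin(9)`, the identity `[J,[J,[J,ω]]] = −4[J,ω]` holds:
on the orthogonal complement of the stabilizer `h_J` inside `spin(9)` the double
commutator satisfies `[J,[J,ω]] = −4ω`, so `(1/2)ad(J)` is a complex structure on the
tangent space of the twistor fibre `𝒯₁`. -/
theorem triple_commutator_eq (x y : Fin 9 → Fin 9 → ℝ)
    (J ω : Matrix (Fin 16) (Fin 16) ℝ)
    (hJdef : J = ∑ p ∈ pairs, x p.1 p.2 • (I p.1 * I p.2))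
    (hJ2 : J * J = -1)
    (hω : ω = ∑ p ∈ pairs, y p.1 p.2 • (I p.1 * I p.2)) :
    comm J (comm J (comm J ω)) = (-4 : ℝ) • comm J ω := by
  have hA : ∀ A : Matrix (Fin 16) (Fin 16) ℝ, J * (J * A) = -A := by
    intro A; rw [← mul_assoc, hJ2, neg_one_mul]
  simp only [comm, mul_sub, sub_mul, mul_assoc, hJ2, hA, mul_neg, mul_one, neg_sub, neg_neg, neg_mul,
    smul_sub]
  module

end Spin9
end

section
/- Let I₁,…,I₉ be the explicit 16×16 real matrices of the standard Spin(9)-structure on ℝ¹⁶, and let J = Σ_{1≤α<β≤9} x_{αβ}·I_αI_β (with real coefficients x_{αβ}) satisfy J² = −Id. Then for all ω = Σ_{1≤α<β≤9} y_{αβ}·I_αI_β and η = Σ_{1≤α<β≤9} z_{αβ}·I_αI_β with real coefficients, the identity [J, [[J, ω], [J, η]]] = 0 holds, where [P,Q] = PQ − QP. (The commutators [J,ω] and [J,η] lie in the orthogonal complement h_J^⊥, and since the quadric 𝒯₁ is a symmetric space, [h_J^⊥, h_J^⊥] ⊂ h_J, the centralizer of J in spin(9); this is the key step showing that W₂₂(ω)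 = [η, ω] satisfies the twistor integrability condition.) -/
open Matrix

namespace Spin9

/-- In any ring, if `J² = -1` then `[J, [[J,ω],[J,η]]] = 0`. -/
theorem aux_comm {R : Type*} [Ring R] (J w n : R) (hJ2 : J * J = -1) :
    J * ((J * w - w * J) * (J * n - n * J) - (J * n - n * J) * (J * w - w * J)) -
      ((J * w - w * J) * (J * n - n * J) - (J * n - n * J) * (J * w - w * J)) * J = 0 := by
  have h : ∀ a : R, J * (J * a) = -a := fun a => by rw [← mul_assoc, hJ2, neg_one_mul]
  simp only [sub_mul, mul_sub, mul_assoc, h, hJ2, mul_neg, neg_mul, mul_one, mul_neg_one,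
    neg_neg, neg_sub, sub_sub_cancel]
  abel

/-- For every `J = ∑_{α<β} x_{αβ} I_αI_β` with `J² = −Id` and all
`ω = ∑_{α<β} y_{αβ} I_αI_β`, `η = ∑_{α<β} z_{αβ} I_αI_β` in `spin(9)`, the identity
`[J, [[J,ω],[J,η]]] = 0` holds: the commutators `[J,ω]`, `[J,η]` lie in `h_J^⊥` and,
the quadric `𝒯₁` being a symmetric space, `[h_J^⊥, h_J^⊥] ⊂ h_J` centralizes `J`. -/
theorem commutator_centralizes (x y z : Fin 9 → Fin 9 → ℝ)
    (J ω η : Matrix (Fin 16) (Fin 16) ℝ)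
    (hJdef : J = ∑ p ∈ pairs, x p.1 p.2 • (I p.1 * I p.2))
    (hJ2 : J * J = -1)
    (hω : ω = ∑ p ∈ pairs, y p.1 p.2 • (I p.1 * I p.2))
    (hη : η = ∑ p ∈ pairs, z p.1 p.2 • (I p.1 * I p.2)) :
    comm J (comm (comm J ω) (comm J η)) = 0 := by
  simp only [comm]
  exact aux_comm J ω η hJ2

end Spin9
end

section
/- Let R(X,Y) denote the constant-curvature operator on ℝ¹⁶: R(X,Y)Z = ⟨Y,Z⟩·X − ⟨X,Z⟩·Y, i.e., as a 16×16 matrix, R(X,Y) = X·Yᵀ − Y·Xᵀ. Then for every skew-symmetric 16×16 real matrix J with J² = −Id and all X, Y ∈ ℝ¹⁶: [R(JX,JY), J] − J·[R(JX,Y), J] − J·[R(X,JY), J] − [R(X,Y), J] = 0, where [P,Q] = PQ − QP. (The curvature tensor of the round sphere S¹⁵ satisfies the curvature-type twistor integrability condition, so the twistor space 𝒯₁(S¹ × S¹⁵) of the nearly parallel Spin(9)-structure on S¹ × S¹⁵ is a complex manifold.) -/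
open Matrix

/-- The constant-curvature operator `R(X,Y) = X·Yᵀ − Y·Xᵀ` on `ℝ¹⁶`,
i.e. `R(X,Y)Z = ⟨Y,Z⟩X − ⟨X,Z⟩Y`. -/
noncomputable def constCurv (X Y : Fin 16 → ℝ) : Matrix (Fin 16) (Fin 16) ℝ :=
  Matrix.vecMulVec X Y - Matrix.vecMulVec Y X

lemma vecMulVec_mul_aux (X Y : Fin 16 → ℝ) (J : Matrix (Fin 16) (Fin 16) ℝ) :
    vecMulVec X Y * J = vecMulVec X (Y ᵥ* J) := by
  ext i j
  simp only [vecMulVec_apply, Matrix.mul_apply, Matrix.vecMul, dotProduct, Finset.mul_sum]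
  exact Finset.sum_congr rfl fun _ _ => by ring

lemma vecMulVec_negl (a b : Fin 16 → ℝ) : vecMulVec (-a) b = -vecMulVec a b := by
  ext i j; simp [vecMulVec_apply]

lemma vecMulVec_negr (a b : Fin 16 → ℝ) : vecMulVec a (-b) = -vecMulVec a b := by
  ext i j; simp [vecMulVec_apply]

lemma mul_vecMulVec_aux (X Y : Fin 16 → ℝ) (J : Matrix (Fin 16) (Fin 16) ℝ) :
    J * vecMulVec X Y = vecMulVec (J *ᵥ X) Y := by
  ext i j
  simp only [vecMulVec_apply, Matrix.mul_apply, Matrix.mulVec, dotProduct, Finset.sum_mul]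
  exact Finset.sum_congr rfl fun _ _ => by ring

/-- For every skew-symmetric 16×16 real matrix `J` with `J² = −Id` and all `X, Y ∈ ℝ¹⁶`,
`[R(JX,JY), J] − J[R(JX,Y), J] − J[R(X,JY), J] − [R(X,Y), J] = 0` where
`R(X,Y) = XYᵀ − YXᵀ` and `[P,Q] = PQ − QP`: the curvature tensor of the round sphere
`S¹⁵` satisfies the curvature-type twistor integrability condition, so the twistor space
`𝒯₁(S¹ × S¹⁵)` of the nearly parallel `Spin(9)`-structure on `S¹ × S¹⁵` is a complex
manifold. -/
theorem constCurv_integrability (J : Matrix (Fin 16) (Fin 16) ℝ)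
    (hskew : Jᵀ = -J) (hJ2 : J * J = -1) (X Y : Fin 16 → ℝ) :
    (constCurv (J.mulVec X) (J.mulVec Y) * J - J * constCurv (J.mulVec X) (J.mulVec Y)) -
      J * (constCurv (J.mulVec X) Y * J - J * constCurv (J.mulVec X) Y) -
      J * (constCurv X (J.mulVec Y) * J - J * constCurv X (J.mulVec Y)) -
      (constCurv X Y * J - J * constCurv X Y) = 0 := by
  have hv : ∀ Z : Fin 16 → ℝ, Z ᵥ* J = -(J *ᵥ Z) := by
    intro Z
    rw [← Matrix.mulVec_transpose, hskew, Matrix.neg_mulVec]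
  have hJJ : ∀ Z : Fin 16 → ℝ, J *ᵥ (J *ᵥ Z) = -Z := by
    intro Z
    rw [Matrix.mulVec_mulVec, hJ2, Matrix.neg_mulVec, Matrix.one_mulVec]
  simp only [constCurv, Matrix.sub_mul, Matrix.mul_sub, vecMulVec_mul_aux, mul_vecMulVec_aux,
    hv, hJJ, mul_neg, neg_neg, vecMulVec_negl, vecMulVec_negr, Matrix.mulVec_neg, neg_neg]
  abel
end
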